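/- If a 3×2 matrix f with entries in R₁ is stable, then all three of its 2×2 minors are nonzero polynomials. -/

import Mathlib

open MvPolynomial Matrix

noncomputable section

/-- The polynomial ring `R = ℂ[x₀,x₁,x₂]`. -/
abbrev Rp : Type := MvPolynomial (Fin 3) ℂ

/-- `p` is a linear form. -/
def IsLin (p : Rp) : Prop := p.IsHomogeneous 1

/-- The `R`-submodule `K ⊗ R` of `ℂ³ ⊗ R ≅ (Fin 3 → R)` attached to a subspace
`K ⊆ ℂ³`; a vector of linear forms lies in it iff it lies in `K ⊗ R₁`. -/
def KtensorR (K : Submodule ℂ (Fin 3 → ℂ)) : Submodule Rp (Fin 3 → Rp) :=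
  Submodule.span Rp ((fun k : Fin 3 → ℂ => fun i => (C (k i) : Rp)) '' (K : Set (Fin 3 → ℂ)))

/-- `f` maps `H ⊆ ℂ²` into `K ⊆ ℂ³`: for every `h ∈ H` the triple of linear forms `f·h`
lies in `K ⊗ R₁`. -/
def MapsInto (f : Matrix (Fin 3) (Fin 2) Rp) (H : Submodule ℂ (Fin 2 → ℂ))
    (K : Submodule ℂ (Fin 3 → ℂ)) : Prop :=
  ∀ h ∈ H, f.mulVec (fun j => (C (h j) : Rp)) ∈ KtensorR K

/-- `f` is stable : `2·dim K > 3·dim H` whenever `f` maps a nonzero `H` into `K` and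
`(H, K) ≠ (ℂ², ℂ³)`. -/
def Stable32 (f : Matrix (Fin 3) (Fin 2) Rp) : Prop :=
  ∀ (H : Submodule ℂ (Fin 2 → ℂ)) (K : Submodule ℂ (Fin 3 → ℂ)), H ≠ ⊥ →
    MapsInto f H K → ¬(H = ⊤ ∧ K = ⊤) →
    3 * Module.finrank ℂ H < 2 * Module.finrank ℂ K

/-!
A vanishing `2 × 2` minor of linear forms `p s = q r` forces a constant linear relation
among the two rows or among the two columns of the minor: a nonzero linear form `p` is
irreducible, hence prime in the factorial ring `ℂ[x₀,x₁,x₂]`, so it divides `q` or `r`, and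
the quotient is a constant. A column relation `f·h` with two zero entries makes `f` map the
line `ℂ h` into a coordinate line, and a row relation `ℓ · f = 0` makes `f` map all of `ℂ²`
into the plane `ℓ = 0`; either pair `(H, K)` violates `2 dim K > 3 dim H`.
-/

section LinearForms

variable {σ K : Type*} [Field K]

theorem MvPolynomial.IsHomogeneous.irreducible_of_ne_zero {p : MvPolynomial σ K}
    (hp : p.IsHomogeneous 1) (hp0 : p ≠ 0) : Irreducible p := by
  refine irreducible_of_totalDegree_eq_one (hp.totalDegree hp0) fun x hx => ?_
  refine isUnit_iff_ne_zero.mpr fun hx0 => hp0 ?_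
  ext i
  simpa [hx0] using hx i

theorem MvPolynomial.IsHomogeneous.exists_eq_C_mul_of_dvd {p q : MvPolynomial σ K}
    (hp : p.IsHomogeneous 1) (hq : q.IsHomogeneous 1) (hp0 : p ≠ 0) (hpq : p ∣ q) :
    ∃ c : K, q = C c * p := by
  obtain ⟨t, rfl⟩ := hpq
  obtain rfl | ht := eq_or_ne t 0
  · exact ⟨0, by simp⟩
  have hdeg := hq.totalDegree (mul_ne_zero hp0 ht)
  rw [totalDegree_mul_of_isDomain hp0 ht, hp.totalDegree hp0] at hdeg
  obtain ⟨c, rfl⟩ : ∃ c, t = C c := ⟨_, totalDegree_eq_zero_iff_eq_C.mp (by omega)⟩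
  exact ⟨c, mul_comm _ _⟩

theorem exists_mulVec_eq_zero_or_vecMul_eq_zero_of_det_eq_zero
    (M : Matrix (Fin 2) (Fin 2) (MvPolynomial σ K)) (hM : ∀ i j, (M i j).IsHomogeneous 1)
    (hdet : M.det = 0) :
    (∃ v : Fin 2 → K, v ≠ 0 ∧ M *ᵥ (C ∘ v) = 0) ∨
      (∃ v : Fin 2 → K, v ≠ 0 ∧ (C ∘ v) ᵥ* M = 0) := by
  rw [det_fin_two] at hdet
  by_cases hp : M 0 0 = 0
  · rcases mul_eq_zero.mp (show M 0 1 * M 1 0 = 0 by linear_combination -hdet + M 1 1 * hp)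
      with hq | hr
    · exact Or.inr ⟨![1, 0], by simp, by funext j; fin_cases j <;> simp [vecMul, hp, hq]⟩
    · exact Or.inl ⟨![1, 0], by simp, by funext i; fin_cases i <;> simp [mulVec, hp, hr]⟩
  have hprime := ((hM 0 0).irreducible_of_ne_zero hp).prime
  have hdvd : M 0 0 ∣ M 0 1 * M 1 0 := ⟨M 1 1, by linear_combination -hdet⟩
  rcases hprime.dvd_or_dvd hdvd with hq | hr
  · obtain ⟨c, hc⟩ := (hM 0 0).exists_eq_C_mul_of_dvd (hM 0 1) hp hq
    have hs : M 1 1 = C c * M 1 0 :=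
      mul_left_cancel₀ hp (by linear_combination hdet + M 1 0 * hc)
    refine Or.inl ⟨![c, -1], by simp, ?_⟩
    funext i; fin_cases i <;> simp [mulVec, hc, hs, mul_comm]
  · obtain ⟨c, hc⟩ := (hM 0 0).exists_eq_C_mul_of_dvd (hM 1 0) hp hr
    have hs : M 1 1 = C c * M 0 1 :=
      mul_left_cancel₀ hp (by linear_combination hdet + M 0 1 * hc)
    refine Or.inr ⟨![c, -1], by simp, ?_⟩
    funext j; fin_cases j <;> simp [vecMul, hc, hs]

end LinearForms

theorem Fin.exists_third_of_ne : ∀ a b : Fin 3, a ≠ b → ∃ c, ∀ i, i ≠ c → i = a ∨ i = b := by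
  decide

theorem C_comp_mem_KtensorR {K : Submodule ℂ (Fin 3 → ℂ)} {k : Fin 3 → ℂ} (hk : k ∈ K) :
    C ∘ k ∈ KtensorR K :=
  Submodule.subset_span ⟨k, hk, rfl⟩

theorem mem_KtensorR_ker_of_dotProduct_eq_zero {ℓ : Fin 3 → ℂ} (hℓ : ℓ ≠ 0) {v : Fin 3 → Rp}
    (hv : (C ∘ ℓ) ⬝ᵥ v = 0) : v ∈ KtensorR (LinearMap.ker (dotProductBilin ℂ ℂ ℓ)) := by
  obtain ⟨i, hi⟩ := Function.ne_iff.mp hℓ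
  set w : Fin 3 → Fin 3 → ℂ := fun j => Pi.single j 1 - (ℓ j / ℓ i) • Pi.single i 1
  have hw : ∀ j, w j ∈ LinearMap.ker (dotProductBilin ℂ ℂ ℓ) := fun j => by
    simp [w, dotProduct_sub, div_mul_cancel₀ _ hi]
  have hvw : v = ∑ j, v j • (C ∘ w j) := by
    have hsum : ∑ j, v j * C (ℓ j / ℓ i) = 0 := by
      have := congrArg (C (ℓ i)⁻¹ * ·) hv
      simp only [dotProduct, Function.comp_apply, Finset.mul_sum, mul_zero] at this
      rw [← this]
      refine Finset.sum_congr rfl fun j _ => ?_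
      rw [div_eq_inv_mul, C_mul]
      ring
    funext k
    by_cases hk : k = i <;> simp [w, Finset.sum_apply, Pi.single_apply, mul_sub, hk, hsum]
  rw [hvw]
  exact Submodule.sum_mem _ fun j _ => Submodule.smul_mem _ _ (C_comp_mem_KtensorR (hw j))

theorem mapsInto_span_singleton {f : Matrix (Fin 3) (Fin 2) Rp} {h : Fin 2 → ℂ}
    {K : Submodule ℂ (Fin 3 → ℂ)} (hfh : f *ᵥ (C ∘ h) ∈ KtensorR K) :
    MapsInto f (ℂ ∙ h) K := by
  intro h' hh'
  obtain ⟨t, rfl⟩ := Submodule.mem_span_singleton.mp hh'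
  have hth : (fun j => (C ((t • h) j) : Rp)) = (C t : Rp) • (C ∘ h) := by funext j; simp
  rw [hth, mulVec_smul]
  exact Submodule.smul_mem _ _ hfh

theorem not_stable32_of_mulVec_eq_single {f : Matrix (Fin 3) (Fin 2) Rp} {h : Fin 2 → ℂ}
    (hh : h ≠ 0) (c : Fin 3) (r : Rp) (hfh : f *ᵥ (C ∘ h) = Pi.single c r) : ¬Stable32 f := by
  intro hst
  set K := ℂ ∙ (Pi.single c 1 : Fin 3 → ℂ)
  have hmaps : MapsInto f (ℂ ∙ h) K := by
    refine mapsInto_span_singleton ?_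
    have hsingle : (Pi.single c r : Fin 3 → Rp) = r • (C ∘ Pi.single c 1) := by
      funext i; by_cases hi : i = c <;> simp [hi]
    rw [hfh, hsingle]
    exact Submodule.smul_mem _ _ (C_comp_mem_KtensorR (Submodule.mem_span_singleton_self _))
  have hK : Module.finrank ℂ K = 1 := finrank_span_singleton (by simp)
  have hineq := hst _ K (by simpa using hh) hmaps fun hHK => by
    have hrank := congrArg (fun S : Submodule ℂ (Fin 3 → ℂ) => Module.finrank ℂ S) hHK.2
    simp [hK] at hrank
  simp [finrank_span_singleton hh, hK] at hineq

theorem not_stable32_of_vecMul_eq_zero {f : Matrix (Fin 3) (Fin 2) Rp} {ℓ : Fin 3 → ℂ}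
    (hℓ : ℓ ≠ 0) (hf : (C ∘ ℓ) ᵥ* f = 0) : ¬Stable32 f := by
  intro hst
  set K := LinearMap.ker (dotProductBilin ℂ ℂ ℓ)
  have hmaps : MapsInto f ⊤ K := fun h _ =>
    mem_KtensorR_ker_of_dotProduct_eq_zero hℓ (by rw [dotProduct_mulVec, hf, zero_dotProduct])
  have hK : K ≠ ⊤ := by
    obtain ⟨i, hi⟩ := Function.ne_iff.mp hℓ
    intro hK
    have hmem : Pi.single i 1 ∈ K := hK ▸ Submodule.mem_top
    exact hi (by simpa [K] using hmem)
  have hineq := hst ⊤ K top_ne_bot hmaps fun hHK => hK hHK.2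
  have hK3 := K.finrank_le
  simp only [finrank_top, Module.finrank_fintype_fun_eq_card, Fintype.card_fin] at hineq hK3
  omega

theorem not_stable32_of_mulVec_submatrix_eq_zero {f : Matrix (Fin 3) (Fin 2) Rp} {a b : Fin 3}
    (hab : a ≠ b) {v : Fin 2 → ℂ} (hv : v ≠ 0) (hfv : f.submatrix ![a, b] id *ᵥ (C ∘ v) = 0) :
    ¬Stable32 f := by
  obtain ⟨c, hc⟩ := Fin.exists_third_of_ne a b hab
  refine not_stable32_of_mulVec_eq_single hv c ((f *ᵥ (C ∘ v)) c) ?_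
  funext i
  by_cases hic : i = c
  · simp [hic]
  · rw [Pi.single_eq_of_ne hic]
    rcases hc i hic with rfl | rfl
    · exact congrFun hfv 0
    · exact congrFun hfv 1

theorem not_stable32_of_vecMul_submatrix_eq_zero {f : Matrix (Fin 3) (Fin 2) Rp} {a b : Fin 3}
    (hab : a ≠ b) {v : Fin 2 → ℂ} (hv : v ≠ 0) (hvf : (C ∘ v) ᵥ* f.submatrix ![a, b] id = 0) :
    ¬Stable32 f := by
  refine not_stable32_of_vecMul_eq_zero (ℓ := Pi.single a (v 0) + Pi.single b (v 1)) ?_ ?_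
  · intro hℓ
    apply hv
    have ha := congrFun hℓ a
    have hb := congrFun hℓ b
    simp only [Pi.add_apply, Pi.single_eq_same, Pi.single_eq_of_ne hab,
      Pi.single_eq_of_ne hab.symm, add_zero, zero_add, Pi.zero_apply] at ha hb
    funext k; fin_cases k <;> simp [ha, hb]
  · have hCℓ : (C ∘ (Pi.single a (v 0) + Pi.single b (v 1)) : Fin 3 → Rp) =
        Pi.single a (C (v 0)) + Pi.single b (C (v 1)) := by
      funext i; simp [Pi.single_apply, apply_ite C]
    rw [hCℓ, add_vecMul, single_vecMul, single_vecMul, ← hvf, vecMul_eq_sum, Fin.sum_univ_two]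
    rfl

/-- if a 3×2 matrix of linear forms is stable, then all its 2×2 minors
are nonzero polynomials. -/
theorem stmt5 (f : Matrix (Fin 3) (Fin 2) Rp) (hf : ∀ i j, IsLin (f i j))
    (hstable : Stable32 f) :
    ∀ a b : Fin 3, a ≠ b → f a 0 * f b 1 - f a 1 * f b 0 ≠ 0 := by
  intro a b hab hdet
  have hdet' : (f.submatrix ![a, b] id).det = 0 := by rw [det_fin_two]; exact hdet
  rcases exists_mulVec_eq_zero_or_vecMul_eq_zero_of_det_eq_zero _ (fun i j => hf _ _) hdet' with
    ⟨v, hv, hfv⟩ | ⟨v, hv, hvf⟩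
  · exact not_stable32_of_mulVec_submatrix_eq_zero hab hv hfv hstable
  · exact not_stable32_of_vecMul_submatrix_eq_zero hab hv hvf hstable
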